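/- arXiv:1410.0975 — 4 statements merged into one kernel-verified Lean document; each statement's English description precedes it below -/
import Mathlib

section
/- If H embeds into G and G satisfies the minimal condition on centralizers, then H satisfies the minimal condition on centralizers. -/
/-!
Pull a strictly decreasing chain `C n = C_H(A n)` back along the embedding `f : H → G` via
`D n = C_G(f '' C_H(C n))`. Since a centralizer is its own double centralizer and `f` is
injective, `f⁻¹(D n) = C_H(C_H(C n)) = C n`; as `D` is antitone, it is strictly decreasing too.
-/

namespace Subgroup

variable {H G ι : Type*} [Group H] [Group G]

theorem centralizer_centralizer_centralizer (s : Set G) :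
    centralizer (centralizer (centralizer s : Set G) : Set G) = centralizer s :=
  SetLike.ext' (Set.centralizer_centralizer_centralizer s)

theorem comap_centralizer_image {f : H →* G} (hf : Function.Injective f) (s : Set H) :
    (centralizer (f '' s)).comap f = centralizer s := by
  ext x
  simp only [mem_comap, mem_centralizer_iff, Set.forall_mem_image, ← map_mul, hf.eq_iff]

def centralizerChainImage (f : H →* G) (C : ι → Subgroup H) (i : ι) : Subgroup G :=
  centralizer (f '' (centralizer (C i : Set H) : Set H))

theorem strictAnti_centralizerChainImage [Preorder ι] {f : H →* G} (hf : Function.Injective f)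
    {C : ι → Subgroup H} (hC : ∀ i, ∃ A : Set H, C i = centralizer A) (hanti : StrictAnti C) :
    StrictAnti (centralizerChainImage f C) := by
  have hcomap : ∀ i, (centralizerChainImage f C i).comap f = C i := fun i => by
    obtain ⟨A, hA⟩ := hC i
    rw [centralizerChainImage, comap_centralizer_image hf, hA,
      centralizer_centralizer_centralizer]
  intro i j hij
  refine lt_of_le_of_ne (centralizer_le (Set.image_mono (centralizer_le (hanti hij).le)))
    fun heq => (hanti hij).ne ?_
  rw [← hcomap i, ← hcomap j, heq]

end Subgroup

/-- If `H` embeds into `G` and `G` satisfies the minimal condition on centralizers,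
then `H` satisfies the minimal condition on centralizers. -/
theorem min_centralizers_of_embedding {H G : Type*} [Group H] [Group G]
    (f : H →* G) (hf : Function.Injective f)
    (hG : ¬ ∃ C : ℕ → Subgroup G,
        (∀ n, ∃ A : Set G, C n = Subgroup.centralizer A) ∧ StrictAnti C) :
    ¬ ∃ C : ℕ → Subgroup H,
        (∀ n, ∃ A : Set H, C n = Subgroup.centralizer A) ∧ StrictAnti C := by
  rintro ⟨C, hC, hanti⟩
  exact hG ⟨Subgroup.centralizerChainImage f C, fun n => ⟨_, rfl⟩,
    Subgroup.strictAnti_centralizerChainImage hf hC hanti⟩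
end

section
/- If G has no central factors and S is a group with trivial center that is simple (e.g., an infinite simple group), then G × S has no central factors. -/
/-!
Let `L ≤ M` be normal in `G × S` with `⁅M, G × S⁆ ≤ L`. Pulling back along `G → G × S` gives such a
pair in `G`, so `M` and `L` have the same `G`-slice. The `S`-slice of `L` is normal in `S`, hence
trivial or everything. If it is everything, `L` and `M` are both their `G`-slice times `S`. If it is
trivial, the `S`-components of `M` commute with all of `S`, hence are trivial, and `L` and `M` are
both their `G`-slice times `1`.
-/

/-- `G` has no central factors: whenever `L ≤ M` are normal subgroups of `G` with
`M/L` central in `G/L` (equivalently `⁅M, G⁆ ≤ L`), we have `M = L`. -/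
def NoCentralFactors (G : Type*) [Group G] : Prop :=
  ∀ L M : Subgroup G, L.Normal → M.Normal → L ≤ M →
    ⁅M, (⊤ : Subgroup G)⁆ ≤ L → M = L

open scoped commutatorElement

namespace Subgroup

variable {G S : Type*} [Group G] [Group S]

lemma eq_prod_top_of_range_inr_le {H : Subgroup (G × S)} (h : (MonoidHom.inr G S).range ≤ H) :
    H = (H.comap (MonoidHom.inl G S)).prod ⊤ := by
  ext ⟨g, s⟩
  have hs : ((1 : G), s) ∈ H := h ⟨s, rfl⟩
  have hgs : ((g, s) : G × S) = (g, 1) * (1, s) := by simp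
  simp only [mem_prod, mem_comap, MonoidHom.inl_apply, mem_top, and_true]
  rw [hgs]
  exact ⟨fun hg => by simpa using H.mul_mem hg (H.inv_mem hs), fun hg => H.mul_mem hg hs⟩

lemma eq_prod_bot_of_le_ker_snd {H : Subgroup (G × S)} (h : H ≤ (MonoidHom.snd G S).ker) :
    H = (H.comap (MonoidHom.inl G S)).prod ⊥ := by
  ext ⟨g, s⟩
  simp only [mem_prod, mem_comap, MonoidHom.inl_apply, mem_bot]
  refine ⟨fun hgs => ?_, fun ⟨hg, hs⟩ => hs ▸ hg⟩
  obtain rfl : s = 1 := h hgs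
  exact ⟨hgs, rfl⟩

lemma map_snd_le_center_of_commutator_le {L M : Subgroup (G × S)} (hML : ⁅M, ⊤⁆ ≤ L)
    (hL : L.comap (MonoidHom.inr G S) = ⊥) : M.map (MonoidHom.snd G S) ≤ center S := by
  rintro _ ⟨m, hm, rfl⟩
  rw [mem_center_iff]
  intro t
  have hcomm : ⁅((1 : G), t), m⁆ ∈ L := by
    rw [← commutator_comm] at hML
    exact hML (commutator_mem_commutator (mem_top _) hm)
  have hinr : ⁅((1 : G), t), m⁆ = MonoidHom.inr G S ⁅t, m.2⁆ := by
    simp [commutatorElement_def, Prod.ext_iff]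
  rw [hinr, ← mem_comap, hL, mem_bot] at hcomm
  exact commutatorElement_eq_one_iff_mul_comm.mp hcomm

end Subgroup

lemma NoCentralFactors.comap_eq_comap {H K : Type*} [Group H] [Group K] (hH : NoCentralFactors H)
    (f : H →* K) {L M : Subgroup K} (hL : L.Normal) (hM : M.Normal) (hLM : L ≤ M)
    (hML : ⁅M, ⊤⁆ ≤ L) : M.comap f = L.comap f := by
  refine hH _ _ (hL.comap f) (hM.comap f) (Subgroup.comap_mono hLM) ?_
  rw [← Subgroup.map_le_iff_le_comap, Subgroup.map_commutator]
  exact (Subgroup.commutator_mono (Subgroup.map_comap_le f M) le_top).trans hML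

/-- If `G` has no central factors and `S` is a simple group with trivial center,
then `G × S` has no central factors. -/
theorem noCentralFactors_prod (G S : Type*) [Group G] [Group S]
    (hG : NoCentralFactors G) [IsSimpleGroup S] (hS : Subgroup.center S = ⊥) :
    NoCentralFactors (G × S) := by
  intro L M hL hM hLM hML
  have hG_slice := hG.comap_eq_comap (MonoidHom.inl G S) hL hM hLM hML
  rcases IsSimpleGroup.eq_bot_or_eq_top_of_normal _ (hL.comap (MonoidHom.inr G S))
    with hbot | htop
  · have hM_ker : M ≤ (MonoidHom.snd G S).ker := by
      rw [← Subgroup.map_eq_bot_iff, ← le_bot_iff, ← hS]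
      exact Subgroup.map_snd_le_center_of_commutator_le hML hbot
    rw [Subgroup.eq_prod_bot_of_le_ker_snd hM_ker,
      Subgroup.eq_prod_bot_of_le_ker_snd (hLM.trans hM_ker), hG_slice]
  · have hL_inr : (MonoidHom.inr G S).range ≤ L := by
      rw [MonoidHom.range_eq_map, Subgroup.map_le_iff_le_comap, htop]
    rw [Subgroup.eq_prod_top_of_range_inr_le (hL_inr.trans hLM),
      Subgroup.eq_prod_top_of_range_inr_le hL_inr, hG_slice]
end

section
/- Let A, B be countable groups and let G = A ≀ B be their restricted wreath product. If N is a normal subgroup of G that intersects the top copy of B nontrivially, then N contains the direct sum of copies of the commutator subgroup [A,A] (i.e., [A,A]^{<B} ≤ N). -/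
open Function

/-- The subgroup of finitely supported functions `B → H`, the base of the
restricted wreath product `H ≀ B`. -/
def restrictedPi (H B : Type*) [Group H] [Group B] : Subgroup (B → H) where
  carrier := {f | (mulSupport f).Finite}
  one_mem' := by simp
  mul_mem' {a b} ha hb := (ha.union hb).subset (mulSupport_mul a b)
  inv_mem' {a} ha := by simpa using ha

/-- The shift action of `b : B` on functions `B → H`. -/
def shiftEquiv (H B : Type*) [Group H] [Group B] (b : B) : (B → H) ≃* (B → H) where
  toFun f := fun x => f (b⁻¹ * x)
  invFun f := fun x => f (b * x)
  left_inv f := by funext x; simp [← mul_assoc]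
  right_inv f := by funext x; simp [← mul_assoc]
  map_mul' f g := rfl

lemma shiftEquiv_mem {H B : Type*} [Group H] [Group B] (b : B) (f : B → H)
    (hf : f ∈ restrictedPi H B) : shiftEquiv H B b f ∈ restrictedPi H B := by
  have h : mulSupport (shiftEquiv H B b f) ⊆ (fun x => b * x) '' mulSupport f := by
    intro x hx
    exact ⟨b⁻¹ * x, hx, by simp⟩
  exact Set.Finite.subset (Set.Finite.image _ hf) h

/-- The shift action of `B` on the finitely supported functions `B → H`. -/
def shiftAut (H B : Type*) [Group H] [Group B] : B →* MulAut (restrictedPi H B) where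
  toFun b :=
    { toFun := fun f => ⟨shiftEquiv H B b f, shiftEquiv_mem (H := H) b (f : B → H) f.2⟩
      invFun := fun f => ⟨shiftEquiv H B b⁻¹ f, shiftEquiv_mem (H := H) b⁻¹ (f : B → H) f.2⟩
      left_inv := fun f => by
        ext x
        simp [shiftEquiv, ← mul_assoc]
      right_inv := fun f => by
        ext x
        simp [shiftEquiv, ← mul_assoc]
      map_mul' := fun f g => rfl }
  map_one' := by
    ext f x
    simp [shiftEquiv]
  map_mul' a b := by
    ext f x
    simp [shiftEquiv, mul_assoc]

/-- The restricted wreath product `H ≀ B`. -/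
abbrev RestrictedWreath (H B : Type*) [Group H] [Group B] :=
  SemidirectProduct (restrictedPi H B) B (shiftAut H B)

/-! If `b ≠ 1` and `(1, b) ∈ N`, then for `f` supported at `x` the commutator `[f, b] ∈ N` lies in
the base and takes the value `f x` at `x`, since `b` moves `x`. Its commutator with a function
supported at `x` with value `a` is the function supported at `x` with value `[f x, a]`. So `N`
contains `[A, A]` in every coordinate, and finitely supported functions are products of functions
supported at single points. -/

open scoped commutatorElement

theorem SemidirectProduct.commutatorElement_inl_inr {N G : Type*} [Group N] [Group G]
    {φ : G →* MulAut N} (n : N) (g : G) :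
    ⁅(inl n : N ⋊[φ] G), (inr g : N ⋊[φ] G)⁆ = inl (n * φ g n⁻¹) := by
  rw [commutatorElement_def, ← map_inv, ← map_inv, mul_assoc, mul_assoc,
    ← mul_assoc (inr g), ← inl_aut, ← map_mul]

namespace Pi

variable {ι G : Type*} [DecidableEq ι] [Group G]

theorem commutatorElement_mulSingle_right (f : ι → G) (i : ι) (a : G) :
    ⁅f, mulSingle i a⁆ = (mulSingle i ⁅f i, a⁆ : ι → G) := by
  ext j
  obtain rfl | hji := eq_or_ne j i
  · simp [commutatorElement_def]
  · simp [commutatorElement_def, mulSingle_eq_of_ne hji]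

theorem mem_of_mulSingle_mem (M : Subgroup (ι → G)) {f : ι → G} (hf : (mulSupport f).Finite)
    (h : ∀ i, mulSingle i (f i) ∈ M) : f ∈ M := by
  suffices ∀ s : Finset ι, ∀ f : ι → G, mulSupport f ⊆ s → (∀ i, mulSingle i (f i) ∈ M) →
      f ∈ M from this hf.toFinset f (by simp) h
  intro s
  induction s using Finset.induction_on with
  | empty =>
    intro f hsupp _
    obtain rfl : f = 1 := by simpa using hsupp
    exact M.one_mem
  | insert a s _ ih =>
    intro f hsupp h
    have hupdate : update f a 1 ∈ M := by
      refine ih _ ?_ fun i => ?_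
      · rw [mulSupport_update_one, Set.sdiff_subset_iff, Set.singleton_union]
        simpa using hsupp
      · obtain rfl | hia := eq_or_ne i a
        · simp
        · simpa [hia] using h i
    rw [update_eq_div_mul_mulSingle, mulSingle_one, mul_one] at hupdate
    simpa using M.mul_mem hupdate (h a)

end Pi

section Wreath

variable {A B : Type*} [Group A] [Group B] [DecidableEq B]

theorem mulSingle_mem_restrictedPi (x : B) (a : A) : Pi.mulSingle x a ∈ restrictedPi A B :=
  (Set.finite_singleton x).subset (Pi.mulSupport_mulSingle_subset)

theorem mulSingle_commutatorElement_mem {N : Subgroup (RestrictedWreath A B)} (hN : N.Normal)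
    {b : B} (hb : b ≠ 1) (hbN : SemidirectProduct.inr b ∈ N) (x : B) (a₁ a₂ : A) :
    SemidirectProduct.inl ⟨Pi.mulSingle x (⁅a₁, a₂⁆ : A), mulSingle_mem_restrictedPi x _⟩ ∈ N := by
  set f : restrictedPi A B := ⟨Pi.mulSingle x a₁, mulSingle_mem_restrictedPi x a₁⟩
  set g : restrictedPi A B := ⟨Pi.mulSingle x a₂, mulSingle_mem_restrictedPi x a₂⟩
  have hfb : SemidirectProduct.inl (f * shiftAut A B b f⁻¹) ∈ N := by
    rw [← SemidirectProduct.commutatorElement_inl_inr]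
    exact Subgroup.commutator_le_right ⊤ N
      (Subgroup.commutator_mem_commutator (Subgroup.mem_top _) hbN)
  have hfbg : SemidirectProduct.inl ⁅f * shiftAut A B b f⁻¹, g⁆ ∈ N := by
    rw [map_commutatorElement]
    exact Subgroup.commutator_le_left N ⊤
      (Subgroup.commutator_mem_commutator hfb (Subgroup.mem_top _))
  have hbx : b⁻¹ * x ≠ x := by simpa using hb
  convert hfbg using 2
  apply Subtype.ext
  change (Pi.mulSingle x ⁅a₁, a₂⁆ : B → A) = ⁅(f : B → A) * (fun y => (f : B → A) (b⁻¹ * y))⁻¹, _⁆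
  rw [Pi.commutatorElement_mulSingle_right]
  simp [f, Pi.mulSingle_eq_of_ne hbx]

theorem mulSingle_mem_of_mem_commutator {N : Subgroup (RestrictedWreath A B)} (hN : N.Normal)
    {b : B} (hb : b ≠ 1) (hbN : SemidirectProduct.inr b ∈ N) (x : B) {c : A}
    (hc : c ∈ commutator A) :
    SemidirectProduct.inl ⟨Pi.mulSingle x c, mulSingle_mem_restrictedPi x c⟩ ∈ N := by
  let S : Subgroup A := (N.comap SemidirectProduct.inl).comap
    ((MonoidHom.mulSingle (fun _ : B => A) x).codRestrict _ (mulSingle_mem_restrictedPi x))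
  have hS : commutator A ≤ S := by
    rw [commutator_def, Subgroup.commutator_le]
    exact fun a₁ _ a₂ _ => mulSingle_commutatorElement_mem hN hb hbN x a₁ a₂
  exact hS hc

end Wreath

theorem wreath_normal_meets_top_general (A B : Type*) [Group A] [Group B]
    (N : Subgroup (RestrictedWreath A B)) (hN : N.Normal)
    (hmeet : N ⊓ (SemidirectProduct.inr : B →* RestrictedWreath A B).range ≠ ⊥) :
    ∀ f : restrictedPi A B, (∀ x : B, (f : B → A) x ∈ commutator A) →
      SemidirectProduct.inl f ∈ N := by
  classical
  obtain ⟨⟨_, hbN, b, rfl⟩, hne⟩ := Subgroup.ne_bot_iff_exists_ne_one.mp hmeet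
  have hb : b ≠ 1 := by rintro rfl; exact hne (Subtype.ext (map_one _))
  intro f hf
  let M : Subgroup (B → A) := (N.comap SemidirectProduct.inl).map (restrictedPi A B).subtype
  have hfM : (f : B → A) ∈ M :=
    Pi.mem_of_mulSingle_mem M f.2 fun x =>
      ⟨_, mulSingle_mem_of_mem_commutator hN hb hbN x (hf x), rfl⟩
  exact (Subgroup.mem_map_iff_mem (Subgroup.subtype_injective _)).mp hfM

/-- Let `G = A ≀ B` be the restricted wreath product of countable groups `A` and `B`.
If `N` is a normal subgroup of `G` meeting the top copy of `B` nontrivially, then `N`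
contains the direct sum of copies of the commutator subgroup `[A,A]`,
i.e. `[A,A]^{<B} ≤ N`. -/
theorem wreath_normal_meets_top (A B : Type*) [Group A] [Group B]
    [Countable A] [Countable B]
    (N : Subgroup (RestrictedWreath A B)) (hN : N.Normal)
    (hmeet : N ⊓ (SemidirectProduct.inr : B →* RestrictedWreath A B).range ≠ ⊥) :
    ∀ f : restrictedPi A B, (∀ x : B, (f : B → A) x ∈ commutator A) →
      SemidirectProduct.inl f ∈ N :=
  wreath_normal_meets_top_general A B N hN hmeet
end

section
/- A countable group G is elementary amenable if and only if there is no infinite descending sequence G = G_0 ≥ G_1 ≥ ... such that for all n ≥ 0, G_n is nontrivial and there is a finitely generated subgroup K_n ≤ G_n with G_{n+1} = [K_n, K_n] ∩ H_n, where H_n is the intersection of all normal subgroups of K_n of index at most n+1. -/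
/-!
Write `D_b(K) = [K, K] ∩ H_b(K)`, where `H_b(K)` is the intersection of the normal subgroups of
index at most `b`. For finitely generated `K`, `H_b(K)` has finite index and its image in
`K ⧸ D_b(K)` is abelian, so `K ⧸ D_b(K)` is elementary amenable. Hence if a countable group is
not elementary amenable, some finitely generated subgroup `K` has `D_b(K)` not elementary
amenable (the group is the increasing union of its finitely generated subgroups), and iterating
with `b = 1, 2, …` produces the chain.

Conversely, consider the groups none of whose subquotients carries such a chain (with index
bounds shifted by an offset). This class contains finite groups (the bound eventually exceeds the
order) and abelian groups (the commutators vanish), and it is closed under countable increasing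
unions (`K₀` lies in one member) and extensions (a chain either eventually enters the normal
subgroup, or its image in the quotient lies under a chain there). Taking subquotients makes it
closed under subgroups and quotients as well, so it contains every elementary amenable group.
-/

universe u

/-- A class `P` of groups is an "elementary class" if it contains all finite groups and
all abelian groups, and is closed under group extensions, countable increasing unions,
subgroups, and quotients. -/
def IsEGClass (P : ∀ (G : Type u) [Group G], Prop) : Prop :=
  (∀ (G : Type u) [Group G], Finite G → P G) ∧
  (∀ (G : Type u) [Group G], (∀ a b : G, a * b = b * a) → P G) ∧
  (∀ (G : Type u) [Group G] (N : Subgroup G) [N.Normal], P N → P (G ⧸ N) → P G) ∧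
  (∀ (G : Type u) [Group G] (H : ℕ → Subgroup G), Monotone H → (∀ n, P (H n)) →
      (∀ g : G, ∃ n, g ∈ H n) → P G) ∧
  (∀ (G : Type u) [Group G] (H : Subgroup G), P G → P H) ∧
  (∀ (G : Type u) [Group G] (N : Subgroup G) [N.Normal], P G → P (G ⧸ N))

/-- A group is elementary amenable if it belongs to every elementary class,
i.e. to the smallest class of groups containing all finite and abelian groups and
closed under extensions, countable increasing unions, subgroups, and quotients. -/
def ElementaryAmenable (G : Type u) [Group G] : Prop :=
  ∀ P : ∀ (H : Type u) [Group H], Prop, IsEGClass P → P G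

open Subgroup

section Cores

variable {X Y : Type*} [Group X] [Group Y]

def boundedIndexCore (b : ℕ) (X : Type*) [Group X] : Subgroup X :=
  ⨅ (N : Subgroup X) (_ : N.Normal) (_ : N.index ≠ 0) (_ : N.index ≤ b), N

def commutatorCore (b : ℕ) (X : Type*) [Group X] : Subgroup X :=
  commutator X ⊓ boundedIndexCore b X

lemma mem_boundedIndexCore {b : ℕ} {x : X} :
    x ∈ boundedIndexCore b X ↔
      ∀ N : Subgroup X, N.Normal → N.index ≠ 0 → N.index ≤ b → x ∈ N := by
  simp only [boundedIndexCore, mem_iInf]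

instance (b : ℕ) : (boundedIndexCore b X).Normal :=
  normal_iInf_normal fun _ ↦ normal_iInf_normal fun hN ↦ normal_iInf_normal fun _ ↦
    normal_iInf_normal fun _ ↦ hN

instance (b : ℕ) : (commutatorCore b X).Normal := by
  unfold commutatorCore; infer_instance

lemma finite_monoidHom_of_fg (P : Type*) [Group P] [Finite P] [hX : Group.FG X] :
    Finite (X →* P) := by
  obtain ⟨T, hT⟩ := hX.out
  refine Finite.of_injective (fun f : X →* P ↦ fun t : (T : Set X) ↦ f t) fun f g hfg ↦ ?_
  exact MonoidHom.eq_of_eqOn_dense hT fun x hx ↦ congrFun hfg ⟨x, hx⟩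

/-- `N` is the kernel of the action of `X` on `X ⧸ N`, which embeds into `Equiv.Perm (Fin b)`. -/
lemma exists_ker_le_of_index_le {N : Subgroup X} [N.Normal] {b : ℕ} (h0 : N.index ≠ 0)
    (hb : N.index ≤ b) : ∃ f : X →* Equiv.Perm (Fin b), f.ker ≤ N := by
  have : Finite (X ⧸ N) := index_ne_zero_iff_finite.mp h0
  have : Fintype (X ⧸ N) := Fintype.ofFinite _
  obtain ⟨ι⟩ : Nonempty (X ⧸ N ↪ Fin b) := Function.Embedding.nonempty_of_card_le (by
    rwa [Fintype.card_fin, ← Nat.card_eq_fintype_card])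
  refine ⟨(Equiv.Perm.viaEmbeddingHom ι).comp (MulAction.toPermHom X (X ⧸ N)), fun x hx ↦ ?_⟩
  rw [← N.normalCore_eq_self, normalCore_eq_ker]
  exact (MonoidHom.ker_comp_of_injective _ _ (Equiv.Perm.viaEmbeddingHom_injective ι)).le hx

instance (b : ℕ) [Group.FG X] : (boundedIndexCore b X).FiniteIndex := by
  have := finite_monoidHom_of_fg (X := X) (Equiv.Perm (Fin b))
  let H := ⨅ f : X →* Equiv.Perm (Fin b), f.ker
  have : H.FiniteIndex := finiteIndex_iInf fun _ ↦ inferInstance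
  refine finiteIndex_of_le (H := H) (le_iInf₂ fun N _ ↦ le_iInf₂ fun h0 hb ↦ ?_)
  obtain ⟨f, hf⟩ := exists_ker_le_of_index_le h0 hb
  exact (iInf_le _ f).trans hf

lemma boundedIndexCore_eq_bot_of_card_le [Finite X] {b : ℕ} (h : Nat.card X ≤ b) :
    boundedIndexCore b X = ⊥ :=
  eq_bot_iff.mpr fun _ hx ↦ mem_boundedIndexCore.mp hx ⊥ normal_bot
    (index_bot (G := X) ▸ Nat.card_pos.ne') (index_bot (G := X) ▸ h)

lemma commutatorCore_eq_bot_of_card_le [Finite X] {b : ℕ} (h : Nat.card X ≤ b) :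
    commutatorCore b X = ⊥ :=
  eq_bot_iff.mpr (inf_le_right.trans (boundedIndexCore_eq_bot_of_card_le h).le)

lemma map_boundedIndexCore_le {f : X →* Y} (hf : Function.Surjective f) (b : ℕ) :
    (boundedIndexCore b X).map f ≤ boundedIndexCore b Y := by
  refine map_le_iff_le_comap.mpr fun x hx ↦ mem_boundedIndexCore.mpr fun N hN h0 hb ↦ ?_
  rw [← index_comap_of_surjective N hf] at h0 hb
  exact mem_boundedIndexCore.mp hx _ (hN.comap f) h0 hb

lemma map_commutatorCore_le {f : X →* Y} (hf : Function.Surjective f) (b : ℕ) :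
    (commutatorCore b X).map f ≤ commutatorCore b Y :=
  (map_inf_le _ _ f).trans <| inf_le_inf
    ((map_commutator_eq X f).trans_le (commutator_mono le_top le_top))
    (map_boundedIndexCore_le hf b)

lemma map_commutatorCore_mulEquiv (e : X ≃* Y) (b : ℕ) :
    (commutatorCore b X).map e = commutatorCore b Y := by
  refine (map_commutatorCore_le e.surjective b).antisymm ?_
  rw [map_equiv_eq_comap_symm, ← map_le_iff_le_comap]
  exact map_commutatorCore_le e.symm.surjective b

end Cores

section CoreOfSubgroup

variable {G G' : Type*} [Group G] [Group G']

def commutatorCoreOf (b : ℕ) (K : Subgroup G) : Subgroup G :=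
  ⁅K, K⁆ ⊓ ⨅ (N : Subgroup K) (_ : N.Normal) (_ : N.index ≠ 0) (_ : N.index ≤ b), N.map K.subtype

lemma commutatorCoreOf_eq_map (b : ℕ) (K : Subgroup G) :
    commutatorCoreOf b K = (commutatorCore b K).map K.subtype := by
  ext x
  simp only [commutatorCoreOf, commutatorCore, ← map_subtype_commutator, mem_inf, mem_iInf,
    mem_map, mem_boundedIndexCore]
  constructor
  · rintro ⟨⟨k, hk, rfl⟩, hcore⟩
    exact ⟨k, ⟨hk, fun N hN h0 hb ↦ by simpa using hcore N hN h0 hb⟩, rfl⟩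
  · rintro ⟨k, ⟨hk, hcore⟩, rfl⟩
    exact ⟨⟨k, hk, rfl⟩, fun N hN h0 hb ↦ ⟨k, hcore N hN h0 hb, rfl⟩⟩

lemma commutatorCoreOf_le (b : ℕ) (K : Subgroup G) : commutatorCoreOf b K ≤ K :=
  (commutatorCoreOf_eq_map b K).trans_le (map_subtype_le _)

lemma map_commutatorCoreOf_le (f : G →* G') (b : ℕ) (K : Subgroup G) :
    (commutatorCoreOf b K).map f ≤ commutatorCoreOf b (K.map f) := by
  rw [commutatorCoreOf_eq_map, commutatorCoreOf_eq_map, map_map,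
    show f.comp K.subtype = (K.map f).subtype.comp (f.subgroupMap K) from rfl, ← map_map]
  exact map_mono (map_commutatorCore_le (f.subgroupMap_surjective K) b)

lemma map_commutatorCoreOf {f : G →* G'} (hf : Function.Injective f) (b : ℕ) (K : Subgroup G) :
    (commutatorCoreOf b K).map f = commutatorCoreOf b (K.map f) := by
  rw [commutatorCoreOf_eq_map, commutatorCoreOf_eq_map, map_map,
    ← map_commutatorCore_mulEquiv (K.equivMapOfInjective f hf), map_map]
  rfl

lemma commutatorCoreOf_subgroupOf {b : ℕ} {K S : Subgroup G} (hKS : K ≤ S) :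
    commutatorCoreOf b (K.subgroupOf S) = (commutatorCoreOf b K).subgroupOf S := by
  apply map_injective S.subtype_injective
  rw [map_commutatorCoreOf S.subtype_injective, map_subgroupOf_eq_of_le hKS,
    map_subgroupOf_eq_of_le ((commutatorCoreOf_le b K).trans hKS)]

end CoreOfSubgroup

lemma MonoidHom.exists_surjective_comp_eq_of_ker_le {A B C : Type*} [Group A] [Group B] [Group C]
    {f : A →* B} (hf : Function.Surjective f) {g : A →* C} (hg : Function.Surjective g)
    (hker : f.ker ≤ g.ker) : ∃ h : B →* C, Function.Surjective h ∧ h.comp f = g :=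
  let h := f.liftOfSurjective hf ⟨g, hker⟩
  have hcomp : h.comp f = g := f.liftOfRightInverse_comp _ _ ⟨g, hker⟩
  ⟨h, .of_comp (hcomp ▸ hg), hcomp⟩

lemma MonoidHom.subgroupComap_injective {G G' : Type*} [Group G] [Group G'] {f : G →* G'}
    (hf : Function.Injective f) (H : Subgroup G') : Function.Injective (f.subgroupComap H) :=
  fun _ _ hxy ↦ Subtype.ext (hf (congrArg Subtype.val hxy))

section Subquotients

/-- Passing to all subquotients turns `P` into a property closed under subgroups and quotients;
this is what lets `¬ HasCoreChain`, which is not visibly closed under quotients, be compared with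
elementary amenability. -/
def AllSubquotients (P : ∀ (G : Type u) [Group G], Prop) (Z : Type u) [Group Z] : Prop :=
  ∀ (Y W : Type u) [Group Y] [Group W] (i : Y →* Z) (f : Y →* W),
    Function.Injective i → Function.Surjective f → P W

variable {P : ∀ (G : Type u) [Group G], Prop} {Z : Type u} [Group Z]

lemma AllSubquotients.quotient (hZ : AllSubquotients P Z) (N : Subgroup Z) [N.Normal] :
    AllSubquotients P (Z ⧸ N) := by
  intro Y W _ _ i f hi hf
  let π := QuotientGroup.mk' N
  let e := MonoidHom.ofInjective hi
  refine hZ _ W (i.range.comap π).subtype (f.comp (e.symm.toMonoidHom.comp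
    (π.subgroupComap i.range))) Subtype.val_injective (hf.comp ?_)
  exact e.symm.surjective.comp
    (π.subgroupComap_surjective_of_surjective _ (QuotientGroup.mk'_surjective N))

/-- A subquotient `W` of `Z` (through `i : Y ↪ Z`, `f : Y ↠ W`) is an extension of
`f (i⁻¹ N)`, a subquotient of `N`, by a quotient of the image of `Y` in `Z ⧸ N`. -/
lemma AllSubquotients.of_extension
    (hext : ∀ (G : Type u) [Group G] (N : Subgroup G) [N.Normal], P N → P (G ⧸ N) → P G)
    (N : Subgroup Z) [N.Normal] (hN : AllSubquotients P N) (hQ : AllSubquotients P (Z ⧸ N)) :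
    AllSubquotients P Z := by
  intro Y W _ _ i f hi hf
  let V := (N.comap i).map f
  have : V.Normal := (normal_comap _).map f hf
  let π := QuotientGroup.mk' N
  have hker : (π.comp i).rangeRestrict.ker ≤ ((QuotientGroup.mk' V).comp f).ker := by
    intro y hy
    rw [MonoidHom.ker_rangeRestrict, MonoidHom.mem_ker, MonoidHom.comp_apply,
      QuotientGroup.mk'_apply, QuotientGroup.eq_one_iff] at hy
    exact (QuotientGroup.eq_one_iff _).mpr (mem_map_of_mem f hy)
  obtain ⟨h, hsurj, -⟩ := MonoidHom.exists_surjective_comp_eq_of_ker_le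
    (π.comp i).rangeRestrict_surjective ((QuotientGroup.mk'_surjective V).comp hf) hker
  exact hext W V (hN _ _ _ _ (i.subgroupComap_injective hi N) (f.subgroupMap_surjective _))
    (hQ _ _ (π.comp i).range.subtype h Subtype.val_injective hsurj)

lemma isEGClass_allSubquotients
    (hfin : ∀ (G : Type u) [Group G], Finite G → P G)
    (hab : ∀ (G : Type u) [Group G], (∀ a b : G, a * b = b * a) → P G)
    (hext : ∀ (G : Type u) [Group G] (N : Subgroup G) [N.Normal], P N → P (G ⧸ N) → P G)
    (hunion : ∀ (G : Type u) [Group G] (H : ℕ → Subgroup G), Monotone H → (∀ n, P (H n)) →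
      (∀ g : G, ∃ n, g ∈ H n) → P G) :
    IsEGClass (AllSubquotients P) := by
  refine ⟨?_, ?_, fun Z _ N _ ↦ AllSubquotients.of_extension hext N, ?_, ?_,
    fun Z _ N _ hZ ↦ hZ.quotient N⟩
  · intro Z _ hZ Y W _ _ i f hi hf
    have : Finite Y := .of_injective i hi
    exact hfin W (.of_surjective f hf)
  · refine fun Z _ hZ Y W _ _ i f hi hf ↦ hab W fun a b ↦ ?_
    obtain ⟨x, rfl⟩ := hf a
    obtain ⟨y, rfl⟩ := hf b
    have hxy : x * y = y * x := hi (by simp only [map_mul]; exact hZ _ _)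
    rw [← map_mul, ← map_mul, hxy]
  · intro Z _ H hH hP hcov Y W _ _ i f hi hf
    refine hunion W (fun n ↦ ((H n).comap i).map f) (fun m n hmn ↦ map_mono (comap_mono (hH hmn)))
      (fun n ↦ hP n _ _ _ _ (i.subgroupComap_injective hi (H n)) (f.subgroupMap_surjective _))
      fun w ↦ ?_
    obtain ⟨y, rfl⟩ := hf w
    obtain ⟨n, hn⟩ := hcov (i y)
    exact ⟨n, mem_map_of_mem f hn⟩
  · intro Z _ H hZ Y W _ _ i f hi hf
    exact hZ Y W (H.subtype.comp i) f (H.subtype_injective.comp hi) hf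

end Subquotients

namespace ElementaryAmenable

variable {Z W : Type u} [Group Z] [Group W]

lemma induction_subquotient {P : ∀ (G : Type u) [Group G], Prop}
    (hfin : ∀ (G : Type u) [Group G], Finite G → P G)
    (hab : ∀ (G : Type u) [Group G], (∀ a b : G, a * b = b * a) → P G)
    (hext : ∀ (G : Type u) [Group G] (N : Subgroup G) [N.Normal], P N → P (G ⧸ N) → P G)
    (hunion : ∀ (G : Type u) [Group G] (H : ℕ → Subgroup G), Monotone H → (∀ n, P (H n)) →
      (∀ g : G, ∃ n, g ∈ H n) → P G)
    (hZ : ElementaryAmenable Z) {Y : Type u} [Group Y] (i : Y →* Z) (hi : Function.Injective i)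
    (f : Y →* W) (hf : Function.Surjective f) : P W :=
  hZ _ (isEGClass_allSubquotients hfin hab hext hunion) Y W i f hi hf

lemma of_finite [Finite Z] : ElementaryAmenable Z :=
  fun _ hP ↦ hP.1 Z ‹_›

lemma of_comm (h : ∀ a b : Z, a * b = b * a) : ElementaryAmenable Z :=
  fun _ hP ↦ hP.2.1 Z h

lemma of_extension (N : Subgroup Z) [N.Normal] (hN : ElementaryAmenable N)
    (hQ : ElementaryAmenable (Z ⧸ N)) : ElementaryAmenable Z :=
  fun P hP ↦ hP.2.2.1 Z N (hN P hP) (hQ P hP)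

lemma of_surjective (hZ : ElementaryAmenable Z) {f : Z →* W} (hf : Function.Surjective f) :
    ElementaryAmenable W :=
  fun _ hP ↦ hZ.induction_subquotient hP.1 hP.2.1 hP.2.2.1 hP.2.2.2.1 (MonoidHom.id Z)
    Function.injective_id f hf

lemma of_mulEquiv (hZ : ElementaryAmenable Z) (e : Z ≃* W) : ElementaryAmenable W :=
  hZ.of_surjective (f := e.toMonoidHom) e.surjective

lemma of_forall_fg [Countable Z] (h : ∀ K : Subgroup Z, K.FG → ElementaryAmenable K) :
    ElementaryAmenable Z := by
  obtain ⟨g, hg⟩ := exists_surjective_nat Z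
  let H n := closure (g '' Set.Iio n)
  have hfg n : (H n).FG := (fg_iff _).mpr ⟨_, rfl, (Set.finite_Iio n).image g⟩
  refine fun P hP ↦ hP.2.2.2.1 Z H (fun m n hmn ↦ closure_mono (Set.image_mono
    (Set.Iio_subset_Iio hmn))) (fun n ↦ h _ (hfg n) P hP) fun z ↦ ?_
  obtain ⟨n, rfl⟩ := hg z
  exact ⟨n + 1, subset_closure ⟨n, Nat.lt_succ_self n, rfl⟩⟩

end ElementaryAmenable

section CommutatorCoreQuotient

open scoped commutatorElement

variable {X : Type u} [Group X]

/-- The image of `boundedIndexCore b X` is abelian, since its commutators lie in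
`commutator X ⊓ boundedIndexCore b X`, and has finite index. -/
lemma elementaryAmenable_quotient_commutatorCore (b : ℕ) [Group.FG X] :
    ElementaryAmenable (X ⧸ commutatorCore b X) := by
  let π := QuotientGroup.mk' (commutatorCore b X)
  let H := (boundedIndexCore b X).map π
  have : H.Normal := Normal.map inferInstance π (QuotientGroup.mk'_surjective _)
  have hcomm : ∀ x y : H, x * y = y * x := by
    rintro ⟨_, x, hx : x ∈ boundedIndexCore b X, rfl⟩ ⟨_, y, hy : y ∈ boundedIndexCore b X, rfl⟩
    refine Subtype.ext ?_
    change π x * π y = π y * π x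
    rw [← map_mul, ← map_mul, QuotientGroup.mk'_apply, QuotientGroup.mk'_apply, QuotientGroup.eq]
    have hxy : (x * y)⁻¹ * (y * x) = ⁅y⁻¹, x⁻¹⁆ := by group
    exact mem_inf.mpr ⟨hxy ▸ commutator_mem_commutator (mem_top _) (mem_top _),
      mul_mem (inv_mem (mul_mem hx hy)) (mul_mem hy hx)⟩
  have : Finite (_ ⧸ H) := index_ne_zero_iff_finite.mp fun h ↦ FiniteIndex.index_ne_zero
    (H := boundedIndexCore b X) (Nat.eq_zero_of_zero_dvd (h ▸ index_map_dvd _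
      (QuotientGroup.mk'_surjective _)))
  exact .of_extension H (.of_comm hcomm) .of_finite

lemma ElementaryAmenable.of_commutatorCore [Group.FG X] {b : ℕ}
    (h : ElementaryAmenable (commutatorCore b X)) : ElementaryAmenable X :=
  .of_extension _ h (elementaryAmenable_quotient_commutatorCore b)

end CommutatorCoreQuotient

lemma Subgroup.FG.map {G G' : Type*} [Group G] [Group G'] {K : Subgroup G} (hK : K.FG)
    (f : G →* G') : (K.map f).FG := by
  classical
  obtain ⟨T, rfl⟩ := hK
  exact ⟨T.image f, by rw [Finset.coe_image, MonoidHom.map_closure]⟩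

lemma Subgroup.FG.subgroupOf {G : Type*} [Group G] {K S : Subgroup G} (hK : K.FG) (hKS : K ≤ S) :
    (K.subgroupOf S).FG := by
  have : Group.FG K := (Group.fg_iff_subgroup_fg K).mpr hK
  exact (Group.fg_iff_subgroup_fg _).mp (inclusion_range hKS ▸ inferInstance)

section Chains

variable {G : Type u} [Group G]

/-- The index bound at step `n` is `n + k`; the offset `k` makes tails of chains chains again. -/
def IsCoreChain (k : ℕ) (A : ℕ → Subgroup G) : Prop :=
  ∀ n, A n ≠ ⊥ ∧ ∃ K ≤ A n, K.FG ∧ A (n + 1) = commutatorCoreOf (n + k) K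

def HasCoreChain (G : Type u) [Group G] : Prop :=
  ∃ (k : ℕ) (A : ℕ → Subgroup G), IsCoreChain k A

namespace IsCoreChain

variable {k : ℕ} {A : ℕ → Subgroup G}

lemma antitone (h : IsCoreChain k A) : Antitone A :=
  antitone_nat_of_succ_le fun n ↦ by
    obtain ⟨-, K, hKA, -, hA⟩ := h n
    exact hA ▸ (commutatorCoreOf_le _ K).trans hKA

lemma shift (h : IsCoreChain k A) (m : ℕ) : IsCoreChain (m + k) fun n ↦ A (m + n) := fun n ↦ by
  obtain ⟨hne, K, hKA, hfg, hA⟩ := h (m + n)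
  exact ⟨hne, K, hKA, hfg, by rwa [show n + (m + k) = m + n + k by omega]⟩

lemma subgroupOf (h : IsCoreChain k A) {S : Subgroup G} (hS : ∀ n, A n ≤ S) :
    IsCoreChain k fun n ↦ (A n).subgroupOf S := fun n ↦ by
  obtain ⟨hne, K, hKA, hfg, hA⟩ := h n
  have hKS := hKA.trans (hS n)
  refine ⟨fun hbot : (A n).subgroupOf S = ⊥ ↦ hne ?_, K.subgroupOf S, comap_mono hKA,
    hfg.subgroupOf hKS, ?_⟩
  · rw [← map_subgroupOf_eq_of_le (hS n), hbot, Subgroup.map_bot]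
  · change (A (n + 1)).subgroupOf S = _
    rw [hA, commutatorCoreOf_subgroupOf hKS]

lemma hasCoreChain_of_le (h : IsCoreChain k A) {S : Subgroup G} {m : ℕ} (hm : A m ≤ S) :
    HasCoreChain S :=
  ⟨m + k, _, (h.shift m).subgroupOf fun n ↦ (h.antitone (Nat.le_add_right m n)).trans hm⟩

end IsCoreChain

lemma not_hasCoreChain_of_finite [Finite G] : ¬ HasCoreChain G := by
  rintro ⟨k, A, h⟩
  obtain ⟨-, K, -, -, hA⟩ := h (Nat.card G)
  have hK : Nat.card K ≤ Nat.card G + k := K.card_le_card_group.trans (Nat.le_add_right _ _)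
  refine (h (Nat.card G + 1)).1 ?_
  rw [hA, commutatorCoreOf_eq_map, commutatorCore_eq_bot_of_card_le hK, Subgroup.map_bot]

lemma not_hasCoreChain_of_comm (hG : ∀ a b : G, a * b = b * a) : ¬ HasCoreChain G := by
  rintro ⟨k, A, h⟩
  obtain ⟨-, K, -, -, hA⟩ := h 0
  have : IsMulCommutative K := ⟨⟨fun a b ↦ Subtype.ext (hG a b)⟩⟩
  refine (h 1).1 ?_
  rw [hA, commutatorCoreOf_eq_map, commutatorCore,
    eq_bot_iff.mpr (inf_le_left.trans (commutator_eq_bot K).le), Subgroup.map_bot]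

lemma HasCoreChain.exists_of_monotone_cover {H : ℕ → Subgroup G} (hH : Monotone H)
    (hcov : ∀ g, ∃ n, g ∈ H n) (h : HasCoreChain G) : ∃ n, HasCoreChain (H n) := by
  obtain ⟨k, A, hA⟩ := h
  obtain ⟨-, K, -, ⟨T, rfl⟩, hA1⟩ := hA 0
  choose f hf using hcov
  refine ⟨T.sup f, hA.hasCoreChain_of_le (m := 1) ?_⟩
  rw [hA1]
  exact (commutatorCoreOf_le _ _).trans
    ((closure_le _).mpr fun t ht ↦ hH (Finset.le_sup ht) (hf t))

/-- If the chain eventually enters `V` it restricts to `V`; otherwise its image in `G ⧸ V`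
stays nontrivial and lies under a chain built from the images of the `Kₙ`. -/
lemma HasCoreChain.of_extension (V : Subgroup G) [V.Normal] (h : HasCoreChain G) :
    HasCoreChain V ∨ HasCoreChain (G ⧸ V) := by
  obtain ⟨k, A, hA⟩ := h
  obtain ⟨m, hm⟩ | hV := em (∃ m, A m ≤ V)
  · exact .inl (hA.hasCoreChain_of_le hm)
  choose _ K hKA hfg hAK using hA
  let π := QuotientGroup.mk' V
  let B : ℕ → Subgroup (G ⧸ V) := fun n ↦
    Nat.casesOn n ((A 0).map π) fun n ↦ commutatorCoreOf (n + k) ((K n).map π)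
  have hAB : ∀ n, (A n).map π ≤ B n
    | 0 => le_rfl
    | n + 1 => hAK n ▸ map_commutatorCoreOf_le π _ _
  refine .inr ⟨k, B, fun n ↦ ⟨fun hB ↦ not_exists.mp hV n ?_, (K n).map π,
    (map_mono (hKA n)).trans (hAB n), (hfg n).map π, rfl⟩⟩
  rw [← QuotientGroup.ker_mk' V, ← Subgroup.map_eq_bot_iff]
  exact le_bot_iff.mp (hB ▸ hAB n)

end Chains

lemma ElementaryAmenable.not_hasCoreChain {G : Type u} [Group G] (hG : ElementaryAmenable G) :
    ¬ HasCoreChain G :=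
  hG.induction_subquotient (P := fun W _ ↦ ¬ HasCoreChain W)
    (fun _ _ _ ↦ not_hasCoreChain_of_finite) (fun _ _ ↦ not_hasCoreChain_of_comm)
    (fun _ _ N _ hN hQ h ↦ (h.of_extension N).elim hN hQ)
    (fun _ _ _ hH hP hcov h ↦ (h.exists_of_monotone_cover hH hcov).elim hP)
    (MonoidHom.id G) Function.injective_id (MonoidHom.id G) Function.surjective_id

section Construction

variable {G : Type u} [Group G] [Countable G]

lemma exists_fg_not_elementaryAmenable_commutatorCoreOf {A : Subgroup G}
    (hA : ¬ ElementaryAmenable A) (b : ℕ) :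
    ∃ K ≤ A, K.FG ∧ ¬ ElementaryAmenable (commutatorCoreOf b K) := by
  by_contra! h
  refine hA (.of_forall_fg fun B hB ↦ ?_)
  let K := B.map A.subtype
  have : Group.FG K := (Group.fg_iff_subgroup_fg K).mpr (hB.map _)
  have hK : ElementaryAmenable (commutatorCore b K) :=
    (h K (map_subtype_le B) (hB.map _)).of_mulEquiv <|
      (MulEquiv.subgroupCongr (commutatorCoreOf_eq_map b K)).trans
        ((commutatorCore b K).equivMapOfInjective _ K.subtype_injective).symm
  exact hK.of_commutatorCore.of_mulEquiv (B.equivMapOfInjective _ A.subtype_injective).symm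

lemma exists_isCoreChain_of_not_elementaryAmenable (hG : ¬ ElementaryAmenable G) :
    ∃ A : ℕ → Subgroup G, A 0 = ⊤ ∧ IsCoreChain 1 A := by
  choose! K hKA hfg hK using fun (A : Subgroup G) (hA : ¬ ElementaryAmenable A) ↦
    exists_fg_not_elementaryAmenable_commutatorCoreOf hA
  obtain ⟨A, hA0, hA_succ⟩ : ∃ A : ℕ → Subgroup G, A 0 = ⊤ ∧
      ∀ n, A (n + 1) = commutatorCoreOf (n + 1) (K (A n) (n + 1)) :=
    ⟨fun n ↦ Nat.rec ⊤ (fun n B ↦ commutatorCoreOf (n + 1) (K B (n + 1))) n, rfl, fun _ ↦ rfl⟩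
  have hA (n : ℕ) : ¬ ElementaryAmenable (A n) := by
    induction n with
    | zero => exact hA0 ▸ fun h ↦ hG (h.of_mulEquiv topEquiv)
    | succ n ih => exact hA_succ n ▸ hK _ ih _
  exact ⟨A, hA0, fun n ↦ ⟨fun h ↦ hA n (h ▸ .of_finite), K (A n) (n + 1), hKA _ (hA n) _,
    hfg _ (hA n) _, hA_succ n⟩⟩

end Construction

/-- A countable group `G` is elementary amenable if and only if there is no infinite
descending sequence `G = G₀ ≥ G₁ ≥ ...` of subgroups such that for all `n`, `Gₙ` is
nontrivial and there is a finitely generated subgroup `Kₙ ≤ Gₙ` with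
`G_{n+1} = [Kₙ, Kₙ] ∩ Hₙ`, where `Hₙ` is the intersection of all normal subgroups of
`Kₙ` of index at most `n + 1`. -/
theorem elementaryAmenable_iff_no_descending_chain (G : Type) [Group G] [Countable G] :
    ElementaryAmenable G ↔
      ¬ ∃ Gs : ℕ → Subgroup G, Gs 0 = ⊤ ∧ (∀ n, Gs (n + 1) ≤ Gs n) ∧
        ∀ n : ℕ, Gs n ≠ ⊥ ∧ ∃ K : Subgroup G, K ≤ Gs n ∧ K.FG ∧
          Gs (n + 1) = ⁅K, K⁆ ⊓
            ⨅ (N : Subgroup K) (_ : N.Normal) (_ : N.index ≠ 0) (_ : N.index ≤ n + 1),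
              Subgroup.map K.subtype N := by
  refine ⟨fun hG ⟨Gs, _, _, hGs⟩ ↦ hG.not_hasCoreChain ⟨1, Gs, hGs⟩, fun h ↦ by_contra fun hG ↦ ?_⟩
  obtain ⟨Gs, h0, hGs⟩ := exists_isCoreChain_of_not_elementaryAmenable hG
  exact h ⟨Gs, h0, fun n ↦ hGs.antitone n.le_succ, hGs⟩
end
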